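/- Assume grade I_1 > 0 and let F = F_K(F) = ⊕_{n≥0} I_n/K·I_n be the fiber cone of the filtration with respect to K, with irrelevant ideal F_+ = ⊕_{n≥1} I_n/K·I_n. Then for every n ≥ 0 the n-th graded component of the F_+-torsion H^0_{F_+}(F) = ⋃_{k≥1}(0 :_F F_+^k) equals (rr_K(I_n) ∩ I_n)/K·I_n. Moreover, if in addition the maximal homogeneous ideal of the associated graded ring G(F) = ⊕_{n≥0} I_n/I_{n+1} has positive grade, then F_+ contains a nonzerodivisor of F if and only if rr_K(I_n) = K·I_n for all n ≥ 0. -/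

import Mathlib

/-!
A homogeneous `y ∈ I_n` is killed by a power of `F_+` iff `y I_1^k ⊆ K I_{n+k}` for some `k`,
since stability of the filtration propagates this condition to all large degrees.

A nonzerodivisor `g = g₀ + g₊` of `G` (resp. `F`) with `g₀ ∈ √I_1` (resp. `g₀ ∈ K`) cancels from
`g^t · y tⁿ`: once `y` satisfies the Ratliff–Rush condition, both a power of `g₀` and a high power
of `g₊` kill `y tⁿ`. Through `G` this gives `rr_K(I_n) ⊆ I_n`, and then through `F` it gives
`rr_K(I_n) = K I_n`. Conversely, if `rr_K(I_n) = K I_n`, then already `I_1 t` has no nonzero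
annihilator in `F`, so `F_+` avoids the finitely many associated primes of the Noetherian ring `F`.
-/

set_option synthInstance.maxHeartbeats 1000000
set_option maxHeartbeats 1000000

open IsLocalRing Polynomial

variable {R : Type*} [CommRing R]

/-- Ratliff–Rush closure of a filtration `{I_n}` with respect to `K`:
`rr_K(I_n) = ⋃_{k ≥ 1} (K·I_{n+k} : I_1^k)`. -/
noncomputable def rrK (K : Ideal R) (I : ℕ → Ideal R) (n : ℕ) : Ideal R :=
  ⨆ k : ℕ, Submodule.colon (K * I (n + (k + 1))) (((I 1) ^ (k + 1) : Ideal R) : Set R)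

/-- The Rees algebra of a multiplicative filtration of ideals, realized as the subalgebra
of `R[X]` of polynomials whose `n`-th coefficient lies in `I_n`. -/
noncomputable def filtRees (I : ℕ → Ideal R) (hI0 : I 0 = ⊤)
    (hImul : ∀ m n : ℕ, I m * I n ≤ I (m + n)) : Subalgebra R R[X] where
  carrier := {p | ∀ n : ℕ, p.coeff n ∈ I n}
  mul_mem' := by
    intro p q hp hq n
    rw [coeff_mul]
    refine Submodule.sum_mem _ ?_
    rintro ⟨i, j⟩ hij
    have hij' : i + j = n := Finset.HasAntidiagonal.mem_antidiagonal.mp hij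
    exact hij' ▸ hImul i j (Ideal.mul_mem_mul (hp i) (hq j))
  add_mem' := by
    intro p q hp hq n
    rw [coeff_add]
    exact Ideal.add_mem _ (hp n) (hq n)
  algebraMap_mem' := by
    intro r n
    rcases Nat.eq_zero_or_pos n with h | h
    · subst h
      simp [hI0]
    · have : n ≠ 0 := h.ne'
      simp [Polynomial.coeff_C, this]

/-- The ideal of the Rees algebra whose degree-`n` component is `K·I_n`; the quotient by it
is the fiber cone `F_K(𝓕) = ⊕_{n ≥ 0} I_n/K·I_n`. -/
noncomputable def filtFibIdeal (I : ℕ → Ideal R) (hI0 : I 0 = ⊤)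
    (hImul : ∀ m n : ℕ, I m * I n ≤ I (m + n)) (K : Ideal R) :
    Ideal (filtRees I hI0 hImul) where
  carrier := {p | ∀ n : ℕ, (p : R[X]).coeff n ∈ K * I n}
  add_mem' := by
    intro a b ha hb n
    show ((a + b : R[X])).coeff n ∈ _
    rw [coeff_add]
    exact Ideal.add_mem _ (ha n) (hb n)
  zero_mem' := by
    intro n
    show ((0 : filtRees I hI0 hImul) : R[X]).coeff n ∈ K * I n
    simp
  smul_mem' := by
    intro c p hp n
    have hc : (c : R[X]) ∈ {p : R[X] | ∀ m : ℕ, p.coeff m ∈ I m} := c.2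
    show ((c • p : filtRees I hI0 hImul) : R[X]).coeff n ∈ K * I n
    have hcp : ((c • p : filtRees I hI0 hImul) : R[X]) = (c : R[X]) * (p : R[X]) := rfl
    rw [hcp, coeff_mul]
    refine Submodule.sum_mem _ ?_
    rintro ⟨i, j⟩ hij
    have hij' : i + j = n := Finset.HasAntidiagonal.mem_antidiagonal.mp hij
    have h1 : (c : R[X]).coeff i * (p : R[X]).coeff j ∈ I i * (K * I j) :=
      Ideal.mul_mem_mul (hc i) (hp j)
    have h2 : I i * (K * I j) ≤ K * I n := by
      rw [mul_left_comm]
      exact hij' ▸ Ideal.mul_mono_right (hImul i j)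
    exact h2 h1

/-- The ideal of the Rees algebra whose degree-`n` component is `I_{n+1}`; the quotient by
it is the associated graded ring `G(𝓕) = ⊕_{n ≥ 0} I_n/I_{n+1}`. -/
noncomputable def filtGIdeal (I : ℕ → Ideal R) (hI0 : I 0 = ⊤)
    (hImul : ∀ m n : ℕ, I m * I n ≤ I (m + n)) :
    Ideal (filtRees I hI0 hImul) where
  carrier := {p | ∀ n : ℕ, (p : R[X]).coeff n ∈ I (n + 1)}
  add_mem' := by
    intro a b ha hb n
    show ((a + b : R[X])).coeff n ∈ _
    rw [coeff_add]
    exact Ideal.add_mem _ (ha n) (hb n)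
  zero_mem' := by
    intro n
    show ((0 : filtRees I hI0 hImul) : R[X]).coeff n ∈ I (n + 1)
    simp
  smul_mem' := by
    intro c p hp n
    have hc : (c : R[X]) ∈ {p : R[X] | ∀ m : ℕ, p.coeff m ∈ I m} := c.2
    show ((c • p : filtRees I hI0 hImul) : R[X]).coeff n ∈ I (n + 1)
    have hcp : ((c • p : filtRees I hI0 hImul) : R[X]) = (c : R[X]) * (p : R[X]) := rfl
    rw [hcp, coeff_mul]
    refine Submodule.sum_mem _ ?_
    rintro ⟨i, j⟩ hij
    have hij' : i + j = n := Finset.HasAntidiagonal.mem_antidiagonal.mp hij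
    have h1 : (c : R[X]).coeff i * (p : R[X]).coeff j ∈ I i * I (j + 1) :=
      Ideal.mul_mem_mul (hc i) (hp j)
    have h2 : I i * I (j + 1) ≤ I (n + 1) := by
      have := hImul i (j + 1)
      rwa [show i + (j + 1) = n + 1 by omega] at this
    exact h2 h1


section Filtration

variable {I : ℕ → Ideal R}

theorem prod_filtration_le_sum (hI0 : I 0 = ⊤) (hImul : ∀ m n : ℕ, I m * I n ≤ I (m + n))
    {ι : Type*} (s : Finset ι) (a : ι → ℕ) : ∏ i ∈ s, I (a i) ≤ I (∑ i ∈ s, a i) := by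
  classical
  induction s using Finset.induction_on with
  | empty => simp [hI0]
  | insert i s hi ih =>
    rw [Finset.prod_insert hi, Finset.sum_insert hi]
    exact (Ideal.mul_mono_right ih).trans (hImul _ _)

theorem filtration_add_eq_pow_mul {N : ℕ} (hN : ∀ n ≥ N, I 1 * I n = I (n + 1)) (r : ℕ) :
    I (N + r) = I 1 ^ r * I N := by
  induction r with
  | zero => simp
  | succ r ih => rw [← add_assoc, ← hN (N + r) (by omega), ih, pow_succ', mul_assoc]

theorem antitone_filtration {K : Ideal R} (hK : ∀ n : ℕ, I (n + 1) ≤ K * I n) : Antitone I :=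
  antitone_nat_of_succ_le fun n => (hK n).trans Ideal.mul_le_right

theorem mul_pow_le_of_mul_pow_le (hImul : ∀ m n : ℕ, I m * I n ≤ I (m + n))
    {J L : Ideal R} {n c : ℕ} (h : J * I 1 ^ c ≤ L * I (n + c)) {m : ℕ} (hcm : c ≤ m) :
    J * I 1 ^ m ≤ L * I (n + m) := by
  induction m, hcm using Nat.le_induction with
  | base => exact h
  | succ m _ ih =>
    calc J * I 1 ^ (m + 1) = J * I 1 ^ m * I 1 := by rw [pow_succ, mul_assoc]
      _ ≤ L * I (n + m) * I 1 := Ideal.mul_mono_left ih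
      _ ≤ L * I (n + (m + 1)) := by rw [mul_assoc]; exact Ideal.mul_mono_right (hImul _ 1)

theorem mul_le_of_mul_pow_le (hImul : ∀ m n : ℕ, I m * I n ≤ I (m + n)) {N : ℕ}
    (hN : ∀ n ≥ N, I 1 * I n = I (n + 1)) {J L : Ideal R} {n c : ℕ}
    (h : J * I 1 ^ c ≤ L * I (n + c)) {m : ℕ} (hm : N + c ≤ m) : J * I m ≤ L * I (n + m) := by
  obtain ⟨r, rfl⟩ := Nat.exists_eq_add_of_le (le_of_add_le_left hm)
  calc J * I (N + r) = J * I 1 ^ r * I N := by rw [filtration_add_eq_pow_mul hN, mul_assoc]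
    _ ≤ L * I (n + r) * I N := Ideal.mul_mono_left (mul_pow_le_of_mul_pow_le hImul h (by omega))
    _ ≤ L * I (n + (N + r)) := by
      rw [mul_assoc, show n + (N + r) = n + r + N by omega]
      exact Ideal.mul_mono_right (hImul _ _)

theorem mem_rrK_iff (hImul : ∀ m n : ℕ, I m * I n ≤ I (m + n)) {K : Ideal R} {n : ℕ} {y : R} :
    y ∈ rrK K I n ↔ ∃ k : ℕ, Ideal.span {y} * I 1 ^ (k + 1) ≤ K * I (n + (k + 1)) := by
  have hcolon : ∀ x k,
      x ∈ Submodule.colon (K * I (n + (k + 1))) ((I 1 ^ (k + 1) : Ideal R) : Set R) ↔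
        Ideal.span {x} * I 1 ^ (k + 1) ≤ K * I (n + (k + 1)) := fun x k => by
    simp only [Submodule.mem_colon, smul_eq_mul, SetLike.mem_coe, Ideal.span_singleton_mul_le_iff]
  have hmono : Monotone fun k : ℕ =>
      Submodule.colon (K * I (n + (k + 1))) ((I 1 ^ (k + 1) : Ideal R) : Set R) :=
    monotone_nat_of_le_succ fun k x hx =>
      (hcolon x _).mpr (mul_pow_le_of_mul_pow_le hImul ((hcolon x k).mp hx) k.succ.le_succ)
  rw [rrK, Submodule.mem_iSup_of_directed _ hmono.directed_le]
  exact exists_congr (hcolon y)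

theorem mul_le_rrK (hImul : ∀ m n : ℕ, I m * I n ≤ I (m + n)) (K : Ideal R) (n : ℕ) :
    K * I n ≤ rrK K I n := fun y hy =>
  (mem_rrK_iff hImul).mpr ⟨0, Ideal.span_singleton_mul_le_iff.mpr fun w hw => by
    rw [pow_one] at hw
    have hle : K * I n * I 1 ≤ K * I (n + 1) := by
      rw [mul_assoc]; exact Ideal.mul_mono_right (hImul n 1)
    exact hle (Ideal.mul_mem_mul hy hw)⟩

end Filtration

section ReesAlgebra

variable {I : ℕ → Ideal R} (hI0 : I 0 = ⊤) (hImul : ∀ m n : ℕ, I m * I n ≤ I (m + n))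

theorem monomial_mem_filtRees {j : ℕ} {y : R} : monomial j y ∈ filtRees I hI0 hImul ↔ y ∈ I j := by
  refine ⟨fun h => by simpa using h j, fun hy m => ?_⟩
  rw [coeff_monomial]
  split_ifs with hjm
  · exact hjm ▸ hy
  · exact zero_mem _

theorem filtRees_fg [IsNoetherianRing R] {N : ℕ} (hN : ∀ n ≥ N, I 1 * I n = I (n + 1)) :
    (filtRees I hI0 hImul).FG := by
  classical
  choose s hs using fun j => IsNoetherian.noetherian (I j)
  let T : Finset R[X] := (Finset.range (N + 2)).biUnion fun j => (s j).image (monomial j)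
  have hT : ∀ p, p ∈ T ↔ ∃ j < N + 2, ∃ r ∈ s j, monomial j r = p := by simp [T]
  have hgen : ∀ j < N + 2, ∀ y ∈ I j, monomial j y ∈ Algebra.adjoin R (T : Set R[X]) := by
    intro j hj y hy
    rw [← hs j] at hy
    have hspan : monomial j y ∈ Submodule.span R (monomial j '' (s j : Set R)) := by
      rw [← Submodule.map_span]
      exact Submodule.mem_map_of_mem hy
    refine Algebra.span_le_adjoin R _ (Submodule.span_mono ?_ hspan)
    rintro _ ⟨r, hr, rfl⟩
    exact (hT _).mpr ⟨j, hj, r, hr, rfl⟩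
  have hmon : ∀ m, ∀ y ∈ I m, monomial m y ∈ Algebra.adjoin R (T : Set R[X]) := by
    intro m
    induction m using Nat.strong_induction_on with
    | _ m ih =>
      intro y hy
      by_cases hm : m < N + 2
      · exact hgen m hm y hy
      obtain ⟨k, rfl⟩ : ∃ k, m = k + 1 := ⟨m - 1, by omega⟩
      rw [← hN k (by omega)] at hy
      refine Submodule.mul_induction_on hy (fun a ha b hb => ?_) (fun a b ha hb => ?_)
      · rw [add_comm, ← monomial_mul_monomial]
        exact mul_mem (ih 1 (by omega) a ha) (ih k (by omega) b hb)
      · rw [map_add]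
        exact add_mem ha hb
  refine ⟨T, le_antisymm (Algebra.adjoin_le fun p hp => ?_) fun p hp => ?_⟩
  · obtain ⟨j, -, r, hr, rfl⟩ := (hT p).mp hp
    exact (monomial_mem_filtRees hI0 hImul).mpr (hs j ▸ Ideal.subset_span hr)
  · rw [p.as_sum_support]
    exact Subalgebra.sum_mem _ fun i _ => hmon i _ (hp i)

theorem isNoetherianRing_filtRees [IsNoetherianRing R] {N : ℕ}
    (hN : ∀ n ≥ N, I 1 * I n = I (n + 1)) : IsNoetherianRing (filtRees I hI0 hImul) :=
  have := (Subalgebra.fg_iff_finiteType _).mp (filtRees_fg hI0 hImul hN)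
  Algebra.FiniteType.isNoetherianRing R _

end ReesAlgebra

theorem Ideal.mem_of_mk_add_mem_nonZeroDivisors {A : Type*} [CommRing A] {Q : Ideal A}
    {a b u : A} {s m : ℕ} (hab : Ideal.Quotient.mk Q (a + b) ∈ nonZeroDivisors (A ⧸ Q))
    (ha : a ^ s * u ∈ Q) (hb : b ^ m * u ∈ Q) : u ∈ Q := by
  have hcolon : (a + b) ^ (s + m - 1) ∈ Q.colon {u} :=
    Ideal.add_pow_add_pred_mem_of_pow_mem _ (Submodule.mem_colon_singleton.mpr ha)
      (Submodule.mem_colon_singleton.mpr hb)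
  have hzero : Ideal.Quotient.mk Q (a + b) ^ (s + m - 1) * Ideal.Quotient.mk Q u = 0 := by
    rw [← map_pow, ← map_mul, Ideal.Quotient.eq_zero_iff_mem]
    exact Submodule.mem_colon_singleton.mp hcolon
  rw [← Ideal.Quotient.eq_zero_iff_mem]
  exact (mul_left_mem_nonZeroDivisors_eq_zero_iff (pow_mem hab _)).mp hzero

theorem Polynomial.coeff_pow_eq_zero_of_lt {p : R[X]} (hp : p.coeff 0 = 0) {m i : ℕ}
    (hi : i < m) : (p ^ m).coeff i = 0 := by
  obtain ⟨q, rfl⟩ := X_dvd_iff.mpr hp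
  rw [mul_pow, mul_comm, coeff_mul_X_pow']
  simp [Nat.not_le.mpr hi]

theorem Polynomial.coeff_mul_monomial_mem {T : ℕ → Ideal R} {p : R[X]} {j : ℕ} {y : R}
    (h : ∀ i, p.coeff i * y ∈ T (i + j)) (d : ℕ) : (p * monomial j y).coeff d ∈ T d := by
  rw [← C_mul_X_pow_eq_monomial, ← mul_assoc, coeff_mul_X_pow', coeff_mul_C]
  split_ifs with hjd
  · simpa [Nat.sub_add_cancel hjd] using h (d - j)
  · exact zero_mem _

section ReesQuotient

variable {I : ℕ → Ideal R} {hI0 : I 0 = ⊤} {hImul : ∀ m n : ℕ, I m * I n ≤ I (m + n)}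

theorem mem_of_mk_mem_nonZeroDivisors {T : ℕ → Ideal R} {Q : Ideal (filtRees I hI0 hImul)}
    (hQ : ∀ p, p ∈ Q ↔ ∀ m, (p : R[X]).coeff m ∈ T m) {g : filtRees I hI0 hImul}
    (hg : Ideal.Quotient.mk Q g ∈ nonZeroDivisors (filtRees I hI0 hImul ⧸ Q))
    {j s M : ℕ} {y : R} (hy : y ∈ I j) (hlow : (g : R[X]).coeff 0 ^ s * y ∈ T j)
    (hhigh : ∀ i > M, ∀ b ∈ I i, y * b ∈ T (i + j)) : y ∈ T j := by
  let u : filtRees I hI0 hImul := ⟨monomial j y, (monomial_mem_filtRees hI0 hImul).mpr hy⟩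
  let g₀ : filtRees I hI0 hImul := algebraMap R _ ((g : R[X]).coeff 0)
  have hu : u ∈ Q := by
    refine Ideal.mem_of_mk_add_mem_nonZeroDivisors (a := g₀) (b := g - g₀) (s := s) (m := M + 1)
      (by rwa [add_sub_cancel]) ((hQ _).mpr ?_) ((hQ _).mpr ?_)
    · refine coeff_mul_monomial_mem fun i => ?_
      simp only [g₀, SubmonoidClass.coe_pow, Subalgebra.coe_algebraMap, algebraMap_eq, ← C_pow,
        coeff_C]
      split_ifs with hi
      · rwa [hi, zero_add]
      · rw [zero_mul]; exact zero_mem _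
    · refine coeff_mul_monomial_mem fun i => ?_
      by_cases hi : i ≤ M
      · rw [SubmonoidClass.coe_pow, coeff_pow_eq_zero_of_lt, zero_mul]
        · exact zero_mem _
        · simp [g₀]
        · omega
      · rw [mul_comm]
        exact hhigh i (by omega) _ (((g - g₀) ^ (M + 1)).2 i)
  simpa [u] using (hQ u).mp hu j

end ReesQuotient

section FiberCone

variable {I : ℕ → Ideal R} {K : Ideal R}

theorem exists_pow_annihilates_iff_mem_rrK (hI0 : I 0 = ⊤)
    (hImul : ∀ m n : ℕ, I m * I n ≤ I (m + n)) {N : ℕ} (hN : ∀ n ≥ N, I 1 * I n = I (n + 1))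
    {n : ℕ} {y : R} :
    (∃ k : ℕ, 1 ≤ k ∧ ∀ a : Fin k → ℕ, (∀ i, 1 ≤ a i) →
      ∀ z ∈ ∏ i, I (a i), y * z ∈ K * I (n + ∑ i, a i)) ↔ y ∈ rrK K I n := by
  rw [mem_rrK_iff hImul]
  constructor
  · rintro ⟨k, hk, h⟩
    obtain ⟨k, rfl⟩ := Nat.exists_eq_add_of_le' hk
    refine ⟨k, Ideal.span_singleton_mul_le_iff.mpr fun w hw => ?_⟩
    simpa using h (fun _ => 1) (fun _ => le_rfl) w (by simpa using hw)
  · rintro ⟨k, hk⟩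
    refine ⟨N + (k + 1), by omega, fun a ha z hz => ?_⟩
    have hsum : N + (k + 1) ≤ ∑ i, a i := by
      simpa using Finset.sum_le_sum fun i (_ : i ∈ Finset.univ) => ha i
    have hz' := prod_filtration_le_sum hI0 hImul _ _ hz
    exact mul_le_of_mul_pow_le hImul hN hk hsum
      (Ideal.mul_mem_mul (Ideal.mem_span_singleton_self y) hz')

variable {hI0 : I 0 = ⊤} {hImul : ∀ m n : ℕ, I m * I n ≤ I (m + n)}

theorem mem_of_span_mul_pow_le (hI : Antitone I) {N : ℕ}
    (hN : ∀ n ≥ N, I 1 * I n = I (n + 1)) {g : filtRees I hI0 hImul}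
    (hg0 : (g : R[X]).coeff 0 ∈ (I 1).radical)
    (hg : Ideal.Quotient.mk (filtGIdeal I hI0 hImul) g ∈
      nonZeroDivisors (filtRees I hI0 hImul ⧸ filtGIdeal I hI0 hImul)) {n c : ℕ} {y : R}
    (h : Ideal.span {y} * I 1 ^ c ≤ I (n + c)) : y ∈ I n := by
  induction n with
  | zero => simp [hI0]
  | succ n ih =>
    have hyn : y ∈ I n := ih (h.trans (hI (by omega)))
    obtain ⟨s, hs⟩ := hg0
    refine mem_of_mk_mem_nonZeroDivisors (T := fun m => I (m + 1)) (fun _ => Iff.rfl) hg hyn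
      (s := s) (M := N + c) ?_ fun i hi b hb => ?_
    · simpa [add_comm] using hImul 1 n (Ideal.mul_mem_mul hs hyn)
    · have h' : Ideal.span {y} * I 1 ^ c ≤ ⊤ * I (n + 1 + c) := by rwa [Ideal.top_mul]
      have hle := mul_le_of_mul_pow_le hImul hN h' (m := i) (by omega)
      rw [Ideal.top_mul, show n + 1 + i = i + n + 1 by omega] at hle
      exact hle (Ideal.mul_mem_mul (Ideal.mem_span_singleton_self y) hb)

theorem rrK_eq_of_nonZeroDivisor_fiberCone (hI : Antitone I) {N : ℕ}
    (hN : ∀ n ≥ N, I 1 * I n = I (n + 1)) {g : filtRees I hI0 hImul}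
    (hg0 : (g : R[X]).coeff 0 ∈ (I 1).radical)
    (hg : Ideal.Quotient.mk (filtGIdeal I hI0 hImul) g ∈
      nonZeroDivisors (filtRees I hI0 hImul ⧸ filtGIdeal I hI0 hImul))
    {f : filtRees I hI0 hImul} (hf0 : (f : R[X]).coeff 0 ∈ K)
    (hf : Ideal.Quotient.mk (filtFibIdeal I hI0 hImul K) f ∈
      nonZeroDivisors (filtRees I hI0 hImul ⧸ filtFibIdeal I hI0 hImul K)) (n : ℕ) :
    rrK K I n = K * I n := by
  refine le_antisymm (fun y hy => ?_) (mul_le_rrK hImul K n)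
  obtain ⟨k, hk⟩ := (mem_rrK_iff hImul).mp hy
  have hyn : y ∈ I n := mem_of_span_mul_pow_le hI hN hg0 hg
    (hk.trans Ideal.mul_le_right)
  refine mem_of_mk_mem_nonZeroDivisors (T := fun m => K * I m) (fun _ => Iff.rfl) hf hyn
    (s := 1) (M := N + (k + 1)) (by simpa using Ideal.mul_mem_mul hf0 hyn) fun i hi b hb => ?_
  have hle := mul_le_of_mul_pow_le hImul hN hk (m := i) (by omega)
  rw [add_comm n] at hle
  exact hle (Ideal.mul_mem_mul (Ideal.mem_span_singleton_self y) hb)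

theorem mem_filtFibIdeal_of_mul_monomial_one_mem (hrr : ∀ n, rrK K I n = K * I n)
    {q : filtRees I hI0 hImul}
    (h : ∀ w (hw : w ∈ I 1), q * ⟨monomial 1 w, (monomial_mem_filtRees hI0 hImul).mpr hw⟩ ∈
      filtFibIdeal I hI0 hImul K) :
    q ∈ filtFibIdeal I hI0 hImul K := fun m => by
  rw [← hrr m, mem_rrK_iff hImul]
  refine ⟨0, Ideal.span_singleton_mul_le_iff.mpr fun w hw => ?_⟩
  rw [zero_add, pow_one] at *
  simpa [coeff_mul_monomial] using h w hw (m + 1)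

theorem exists_nonZeroDivisor_fiberCone_of_rrK_eq [IsNoetherianRing R] {N : ℕ}
    (hN : ∀ n ≥ N, I 1 * I n = I (n + 1)) (hrr : ∀ n, rrK K I n = K * I n) :
    ∃ f : filtRees I hI0 hImul, (f : R[X]).coeff 0 ∈ K ∧
      Ideal.Quotient.mk (filtFibIdeal I hI0 hImul K) f ∈
        nonZeroDivisors (filtRees I hI0 hImul ⧸ filtFibIdeal I hI0 hImul K) := by
  have := isNoetherianRing_filtRees hI0 hImul hN
  let Fplus : Ideal (filtRees I hI0 hImul ⧸ filtFibIdeal I hI0 hImul K) :=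
    (K.comap (constantCoeff.comp (filtRees I hI0 hImul).val.toRingHom)).map
      (Ideal.Quotient.mk _)
  have : FaithfulSMul (filtRees I hI0 hImul ⧸ filtFibIdeal I hI0 hImul K) Fplus := by
    refine (Module.annihilator_eq_bot (R := filtRees I hI0 hImul ⧸ filtFibIdeal I hI0 hImul K)
      (M := Fplus)).mp <| (Submodule.eq_bot_iff _).mpr fun z hz => ?_
    obtain ⟨q, rfl⟩ := Ideal.Quotient.mk_surjective z
    refine Ideal.Quotient.eq_zero_iff_mem.mpr (mem_filtFibIdeal_of_mul_monomial_one_mem hrr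
      fun w hw => ?_)
    have hmem : Ideal.Quotient.mk _
        ⟨monomial 1 w, (monomial_mem_filtRees hI0 hImul).mpr hw⟩ ∈ Fplus :=
      Ideal.mem_map_of_mem _ (by simp)
    rw [← Ideal.Quotient.eq_zero_iff_mem, map_mul]
    exact congrArg Subtype.val (Module.mem_annihilator.mp hz ⟨_, hmem⟩)
  obtain ⟨_, hJ, hnzd⟩ := Ideal.nonempty_inter_nonZeroDivisors_of_faithfulSMul
    (A := filtRees I hI0 hImul ⧸ filtFibIdeal I hI0 hImul K) (I := Fplus)
  obtain ⟨f, hf, rfl⟩ := (Ideal.mem_map_iff_of_surjective _ Ideal.Quotient.mk_surjective).mp hJ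
  exact ⟨f, hf, hnzd⟩

end FiberCone

theorem stmt4_general [IsNoetherianRing R] [IsLocalRing R]
    (I : ℕ → Ideal R) (K : Ideal R)
    (hI0 : I 0 = ⊤)
    (hImul : ∀ m n : ℕ, I m * I n ≤ I (m + n))
    (hIstab : ∃ N : ℕ, ∀ n ≥ N, I 1 * I n = I (n + 1))
    (hIprim : (I 1).radical = maximalIdeal R)
    (hK : ∀ n : ℕ, I (n + 1) ≤ K * I n) :
    (∀ n : ℕ, ∀ y ∈ I n,
      ((∃ k : ℕ, 1 ≤ k ∧ ∀ a : Fin k → ℕ, (∀ i, 1 ≤ a i) →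
          ∀ z ∈ ∏ i, I (a i), y * z ∈ K * I (n + ∑ i, a i)) ↔
        y ∈ rrK K I n)) ∧
    ((∃ g : filtRees I hI0 hImul, (g : R[X]).coeff 0 ∈ maximalIdeal R ∧
        Ideal.Quotient.mk (filtGIdeal I hI0 hImul) g ∈
          nonZeroDivisors (↥(filtRees I hI0 hImul) ⧸ filtGIdeal I hI0 hImul)) →
      ((∃ f : filtRees I hI0 hImul, (f : R[X]).coeff 0 ∈ K ∧
          Ideal.Quotient.mk (filtFibIdeal I hI0 hImul K) f ∈
            nonZeroDivisors (↥(filtRees I hI0 hImul) ⧸ filtFibIdeal I hI0 hImul K)) ↔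
        ∀ n : ℕ, rrK K I n = K * I n)) := by
  obtain ⟨N, hN⟩ := hIstab
  refine ⟨fun n y _ => exists_pow_annihilates_iff_mem_rrK hI0 hImul hN, ?_⟩
  rintro ⟨g, hg0, hg⟩
  rw [← hIprim] at hg0
  exact ⟨fun ⟨f, hf0, hf⟩ =>
    rrK_eq_of_nonZeroDivisor_fiberCone (antitone_filtration hK) hN hg0 hg hf0 hf,
    exists_nonZeroDivisor_fiberCone_of_rrK_eq hN⟩

/-- For the fiber cone `F = F_K(𝓕)` of a Hilbert filtration with respect to `K` in a
Noetherian local ring with `grade I_1 > 0`: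
(a) for every `n ≥ 0`, the `n`-th graded component of `H^0_{F_+}(F) = ⋃_k (0 :_F F_+^k)`
equals `(rr_K(I_n) ∩ I_n)/K·I_n` (stated elementwise: for `y ∈ I_n`, the image `y°`
is annihilated by some power of `F_+` iff `y ∈ rr_K(I_n)`); and
(b) if moreover the maximal homogeneous ideal of `G(𝓕)` has positive grade (i.e. contains
a nonzerodivisor of `G(𝓕)`), then `F_+` contains a nonzerodivisor of `F` iff
`rr_K(I_n) = K·I_n` for all `n ≥ 0`. -/
theorem stmt4 [IsNoetherianRing R] [IsLocalRing R] [Infinite (ResidueField R)]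
    (hdim : (0 : WithBot ℕ∞) < ringKrullDim R)
    (I : ℕ → Ideal R) (K : Ideal R)
    (hI0 : I 0 = ⊤)
    (hImul : ∀ m n : ℕ, I m * I n ≤ I (m + n))
    (hIstab : ∃ N : ℕ, ∀ n ≥ N, I 1 * I n = I (n + 1))
    (hIprim : (I 1).radical = maximalIdeal R)
    (hK : ∀ n : ℕ, I (n + 1) ≤ K * I n)
    (hgrade : ∃ x ∈ I 1, x ∈ nonZeroDivisors R) :
    (∀ n : ℕ, ∀ y ∈ I n,
      ((∃ k : ℕ, 1 ≤ k ∧ ∀ a : Fin k → ℕ, (∀ i, 1 ≤ a i) →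
          ∀ z ∈ ∏ i, I (a i), y * z ∈ K * I (n + ∑ i, a i)) ↔
        y ∈ rrK K I n)) ∧
    ((∃ g : filtRees I hI0 hImul, (g : R[X]).coeff 0 ∈ maximalIdeal R ∧
        Ideal.Quotient.mk (filtGIdeal I hI0 hImul) g ∈
          nonZeroDivisors (↥(filtRees I hI0 hImul) ⧸ filtGIdeal I hI0 hImul)) →
      ((∃ f : filtRees I hI0 hImul, (f : R[X]).coeff 0 ∈ K ∧
          Ideal.Quotient.mk (filtFibIdeal I hI0 hImul K) f ∈
            nonZeroDivisors (↥(filtRees I hI0 hImul) ⧸ filtFibIdeal I hI0 hImul K)) ↔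
        ∀ n : ℕ, rrK K I n = K * I n)) :=
  stmt4_general I K hI0 hImul hIstab hIprim hK
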